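/- arXiv:2111.14716 — 2 statements merged into one kernel-verified Lean document; each statement's English description precedes it below -/
import Mathlib

section
/- Let n ≥ 6 and let n₁ + n₂ = n₃ + n₄ = n with n₁, n₂, n₃, n₄ ≥ 3. Let T' be the tree obtained from disjoint paths P_{n₁} and P_{n₂} by joining a non-pendant vertex of P_{n₁} to a non-pendant vertex of P_{n₂} with an edge, and let T'' be obtained similarly from P_{n₃} and P_{n₄}. Then TW(T') = TW(T''). -/
open Finset SimpleGraph

noncomputable section
open scoped Classical

/-- The set of pendant (degree-1) vertices of a finite graph. -/
def pendants {V : Type*} (G : SimpleGraph V) [Fintype V] : Finset V :=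
  Finset.univ.filter fun v => G.degree v = 1

/-- `dplus G u` is the sum of the distances from `u` to the pendant vertices of `G`. -/
def dplus {V : Type*} (G : SimpleGraph V) [Fintype V] (u : V) : ℕ :=
  ∑ v ∈ pendants G, G.dist u v

/-- Terminal Wiener index: sum of distances over unordered pairs of pendant vertices
(each unordered pair is counted twice in the double sum, hence the division by 2). -/
def TW {V : Type*} (G : SimpleGraph V) [Fintype V] : ℕ :=
  (∑ u ∈ pendants G, ∑ v ∈ pendants G, G.dist u v) / 2

/-- The graph obtained from disjoint `A` and `B` by adding the new (cut) edge `uv`. -/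
def joinEdge {α β : Type*} (A : SimpleGraph α) (B : SimpleGraph β) (u : α) (v : β) :
    SimpleGraph (α ⊕ β) :=
  SimpleGraph.fromRel fun x y =>
    match x, y with
    | Sum.inl a, Sum.inl a' => A.Adj a a'
    | Sum.inr b, Sum.inr b' => B.Adj b b'
    | Sum.inl a, Sum.inr b => a = u ∧ b = v
    | Sum.inr _, Sum.inl _ => False


-- general Lipschitz lower bound on walk length
lemma walk_length_ge {V : Type*} {G : SimpleGraph V} (f : V → ℤ)
    (hf : ∀ p q, G.Adj p q → |f p - f q| ≤ 1) {p q : V} (w : G.Walk p q) :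
    |f p - f q| ≤ (w.length : ℤ) := by
  induction w with
  | nil => simp
  | @cons x y z h w ih =>
    have h1 := hf _ _ h
    have := abs_sub_abs_le_abs_sub (f x - f z) (f y - f z)
    have h2 : |f x - f z| ≤ |f x - f y| + |f y - f z| := by
      calc |f x - f z| = |(f x - f y) + (f y - f z)| := by ring_nf
        _ ≤ |f x - f y| + |f y - f z| := abs_add_le _ _
    simp only [SimpleGraph.Walk.length_cons]
    push_cast
    linarith

-- explicit walks in pathGraph
lemma pathGraph_walk (n i d : ℕ) (h : i + d < n) :
    ∃ w : (pathGraph n).Walk ⟨i, by omega⟩ ⟨i + d, h⟩, w.length = d := by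
  induction d with
  | zero => exact ⟨SimpleGraph.Walk.nil, rfl⟩
  | succ k ih =>
    obtain ⟨w, hw⟩ := ih (by omega)
    have hadj : (pathGraph n).Adj ⟨i + k, by omega⟩ ⟨i + (k+1), h⟩ := by
      rw [pathGraph_adj]; left; simp; omega
    exact ⟨w.concat hadj, by simp [hw]⟩

lemma pathGraph_dist_le (n : ℕ) (i j : Fin n) (hij : i.val ≤ j.val) :
    (pathGraph n).dist i j ≤ j.val - i.val := by
  obtain ⟨w, hw⟩ := pathGraph_walk n i.val (j.val - i.val) (by omega)
  have hi : (⟨i.val, by omega⟩ : Fin n) = i := rfl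
  have hj : (⟨i.val + (j.val - i.val), by omega⟩ : Fin n) = j := by
    ext; simp; omega
  have := SimpleGraph.dist_le (w.copy hi hj)
  simpa [hw] using this

lemma pathGraph_dist (n : ℕ) (i j : Fin n) :
    (pathGraph n).dist i j = max i.val j.val - min i.val j.val := by
  have key : ∀ i j : Fin n, i.val ≤ j.val → (pathGraph n).dist i j = j.val - i.val := by
    intro i j hij
    refine le_antisymm (pathGraph_dist_le n i j hij) ?_
    obtain ⟨w, hw⟩ := ((pathGraph_preconnected n) i j).exists_walk_length_eq_dist
    have := walk_length_ge (fun v : Fin n => (v.val : ℤ))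
      (by intro p q hpq; rw [pathGraph_adj] at hpq
          simp only [abs_le]; constructor <;> [omega; omega]) w
    rw [hw] at this
    simp only [abs_le] at this; omega
  rcases le_total i.val j.val with h | h
  · rw [key i j h]; omega
  · rw [SimpleGraph.dist_comm, key j i h]; omega


variable {α β : Type*} {A : SimpleGraph α} {B : SimpleGraph β} {u : α} {v : β}

@[simp] lemma joinEdge_adj_ll {x y : α} :
    (joinEdge A B u v).Adj (Sum.inl x) (Sum.inl y) ↔ A.Adj x y := by
  simp only [joinEdge, SimpleGraph.fromRel_adj]
  constructor
  · rintro ⟨h, h' | h'⟩ <;> [exact h'; exact h'.symm]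
  · intro h; exact ⟨by simpa using h.ne, Or.inl h⟩

@[simp] lemma joinEdge_adj_rr {x y : β} :
    (joinEdge A B u v).Adj (Sum.inr x) (Sum.inr y) ↔ B.Adj x y := by
  simp only [joinEdge, SimpleGraph.fromRel_adj]
  constructor
  · rintro ⟨h, h' | h'⟩ <;> [exact h'; exact h'.symm]
  · intro h; exact ⟨by simpa using h.ne, Or.inl h⟩

@[simp] lemma joinEdge_adj_lr {x : α} {y : β} :
    (joinEdge A B u v).Adj (Sum.inl x) (Sum.inr y) ↔ x = u ∧ y = v := by
  simp only [joinEdge, SimpleGraph.fromRel_adj]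
  constructor
  · rintro ⟨h, h' | h'⟩ <;> [exact h'; exact h'.elim]
  · rintro ⟨rfl, rfl⟩; exact ⟨by simp, Or.inl ⟨rfl, rfl⟩⟩

@[simp] lemma joinEdge_adj_rl {x : α} {y : β} :
    (joinEdge A B u v).Adj (Sum.inr y) (Sum.inl x) ↔ x = u ∧ y = v := by
  rw [SimpleGraph.adj_comm]; exact joinEdge_adj_lr

lemma dist_le_add_one {V : Type*} {G : SimpleGraph V} {p q y : V}
    (h : G.Adj p q) (hr : G.Reachable q y) : G.dist p y ≤ G.dist q y + 1 := by
  obtain ⟨w, hw⟩ := hr.exists_walk_length_eq_dist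
  have := SimpleGraph.dist_le (SimpleGraph.Walk.cons h w)
  simpa [hw, Nat.add_comm] using this

lemma adj_dist_lip {V : Type*} {G : SimpleGraph V} {p q y : V}
    (h : G.Adj p q) (hr1 : G.Reachable p y) (hr2 : G.Reachable q y) :
    |(G.dist p y : ℤ) - (G.dist q y : ℤ)| ≤ 1 := by
  have h1 := dist_le_add_one h hr2
  have h2 := dist_le_add_one h.symm hr1
  simp only [abs_le]; omega

def homL : A →g joinEdge A B u v where
  toFun := Sum.inl
  map_rel' := by intro x y h; simpa using h

def homR : B →g joinEdge A B u v where
  toFun := Sum.inr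
  map_rel' := by intro x y h; simpa using h

lemma joinEdge_dist_ll (hA : A.Preconnected) (x y : α) :
    (joinEdge A B u v).dist (Sum.inl x) (Sum.inl y) = A.dist x y := by
  obtain ⟨w, hw⟩ := (hA x y).exists_walk_length_eq_dist
  refine le_antisymm ?_ ?_
  · have := SimpleGraph.dist_le (w.map (homL (B := B) (u := u) (v := v)))
    simp only [SimpleGraph.Walk.length_map, hw] at this; exact this
  · have hr : (joinEdge A B u v).Reachable (Sum.inl x) (Sum.inl y) :=
      ⟨w.map homL⟩
    obtain ⟨w', hw'⟩ := hr.exists_walk_length_eq_dist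
    have key := walk_length_ge (G := joinEdge A B u v)
      (fun z => match z with
        | Sum.inl z => (A.dist z y : ℤ)
        | Sum.inr _ => (A.dist u y : ℤ) + 1) ?_ w'
    · rw [hw'] at key
      simp only at key
      have h0 : A.dist y y = 0 := by simp
      rw [h0] at key
      simp only [abs_le] at key
      omega
    · rintro (p | p) (q | q) hpq <;> simp only at *
      · rw [joinEdge_adj_ll] at hpq
        exact adj_dist_lip hpq (hA p y) (hA q y)
      · rw [joinEdge_adj_lr] at hpq
        obtain ⟨rfl, rfl⟩ := hpq
        simp
      · rw [joinEdge_adj_rl] at hpq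
        obtain ⟨rfl, rfl⟩ := hpq
        simp
      · simp

lemma joinEdge_dist_rr (hB : B.Preconnected) (x y : β) :
    (joinEdge A B u v).dist (Sum.inr x) (Sum.inr y) = B.dist x y := by
  obtain ⟨w, hw⟩ := (hB x y).exists_walk_length_eq_dist
  refine le_antisymm ?_ ?_
  · have := SimpleGraph.dist_le (w.map (homR (A := A) (u := u) (v := v)))
    simp only [SimpleGraph.Walk.length_map, hw] at this; exact this
  · have hr : (joinEdge A B u v).Reachable (Sum.inr x) (Sum.inr y) :=
      ⟨w.map homR⟩
    obtain ⟨w', hw'⟩ := hr.exists_walk_length_eq_dist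
    have key := walk_length_ge (G := joinEdge A B u v)
      (fun z => match z with
        | Sum.inr z => (B.dist z y : ℤ)
        | Sum.inl _ => (B.dist v y : ℤ) + 1) ?_ w'
    · rw [hw'] at key
      simp only at key
      have h0 : B.dist y y = 0 := by simp
      rw [h0] at key
      simp only [abs_le] at key
      omega
    · rintro (p | p) (q | q) hpq <;> simp only at *
      · simp
      · rw [joinEdge_adj_lr] at hpq
        obtain ⟨rfl, rfl⟩ := hpq
        simp
      · rw [joinEdge_adj_rl] at hpq
        obtain ⟨rfl, rfl⟩ := hpq
        simp
      · rw [joinEdge_adj_rr] at hpq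
        exact adj_dist_lip hpq (hB p y) (hB q y)

lemma joinEdge_dist_lr (hA : A.Preconnected) (hB : B.Preconnected) (x : α) (y : β) :
    (joinEdge A B u v).dist (Sum.inl x) (Sum.inr y) = A.dist x u + 1 + B.dist v y := by
  obtain ⟨wa, hwa⟩ := (hA x u).exists_walk_length_eq_dist
  obtain ⟨wb, hwb⟩ := (hB v y).exists_walk_length_eq_dist
  have hadj : (joinEdge A B u v).Adj (Sum.inl u) (Sum.inr v) := by simp
  set W := (wa.map (homL (B := B) (u := u) (v := v))).append
      (SimpleGraph.Walk.cons hadj (wb.map homR)) with hW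
  have hWl : W.length = A.dist x u + 1 + B.dist v y := by
    rw [hW, SimpleGraph.Walk.length_append, SimpleGraph.Walk.length_map, hwa]
    show A.dist x u + ((wb.map homR).length + 1) = _
    rw [SimpleGraph.Walk.length_map, hwb]; omega
  refine le_antisymm (hWl ▸ SimpleGraph.dist_le W) ?_
  · have hre : (joinEdge A B u v).Reachable (Sum.inl x) (Sum.inr y) := ⟨W⟩
    obtain ⟨w', hw'⟩ := hre.exists_walk_length_eq_dist
    have key := walk_length_ge (G := joinEdge A B u v)
      (fun z => match z with
        | Sum.inl z => (A.dist z u : ℤ)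
        | Sum.inr w => -(1 + (B.dist v w : ℤ))) ?_ w'
    · rw [hw'] at key
      simp only [abs_le] at key
      omega
    · rintro (p | p) (q | q) hpq <;> simp only at *
      · rw [joinEdge_adj_ll] at hpq
        exact adj_dist_lip hpq (hA p u) (hA q u)
      · rw [joinEdge_adj_lr] at hpq
        obtain ⟨rfl, rfl⟩ := hpq
        simp only [SimpleGraph.dist_self]; norm_num
      · rw [joinEdge_adj_rl] at hpq
        obtain ⟨rfl, rfl⟩ := hpq
        simp only [SimpleGraph.dist_self]; norm_num
      · rw [joinEdge_adj_rr] at hpq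
        have := adj_dist_lip hpq.symm (hB q v) (hB p v)
        rw [SimpleGraph.dist_comm (u := q), SimpleGraph.dist_comm (u := p)] at this
        simp only [abs_le] at this ⊢
        omega

lemma joinEdge_dist_rl (hA : A.Preconnected) (hB : B.Preconnected) (x : α) (y : β) :
    (joinEdge A B u v).dist (Sum.inr y) (Sum.inl x) = A.dist x u + 1 + B.dist v y := by
  rw [SimpleGraph.dist_comm]; exact joinEdge_dist_lr hA hB x y


lemma pathGraph_nbhd_interior {n : ℕ} (v : Fin n) (h1 : 0 < v.val) (h2 : v.val + 1 < n) :
    (pathGraph n).neighborFinset v = {⟨v.val - 1, by omega⟩, ⟨v.val + 1, by omega⟩} := by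
  ext w
  simp only [mem_neighborFinset, pathGraph_adj, Finset.mem_insert, Finset.mem_singleton,
    Fin.ext_iff]
  omega

lemma pathGraph_degree_interior {n : ℕ} (v : Fin n) (h1 : 0 < v.val) (h2 : v.val + 1 < n) :
    (pathGraph n).degree v = 2 := by
  rw [SimpleGraph.degree, pathGraph_nbhd_interior v h1 h2]
  rw [Finset.card_insert_of_notMem (by simp only [Finset.mem_singleton, Fin.ext_iff]; omega)]
  simp

lemma pathGraph_degree_zero {n : ℕ} (hn : 2 ≤ n) (v : Fin n) (h : v.val = 0) :
    (pathGraph n).degree v = 1 := by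
  have : (pathGraph n).neighborFinset v = {⟨1, by omega⟩} := by
    ext w
    simp only [mem_neighborFinset, pathGraph_adj, Finset.mem_singleton, Fin.ext_iff]
    omega
  rw [SimpleGraph.degree, this]; simp

lemma pathGraph_degree_last {n : ℕ} (hn : 2 ≤ n) (v : Fin n) (h : v.val = n - 1) :
    (pathGraph n).degree v = 1 := by
  have : (pathGraph n).neighborFinset v = {⟨n - 2, by omega⟩} := by
    ext w
    simp only [mem_neighborFinset, pathGraph_adj, Finset.mem_singleton, Fin.ext_iff]
    omega
  rw [SimpleGraph.degree, this]; simp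

lemma pathGraph_deg_ne_one_interior {n : ℕ} (hn : 3 ≤ n) (v : Fin n)
    (h : (pathGraph n).degree v ≠ 1) : 0 < v.val ∧ v.val + 1 < n := by
  by_contra hc
  push_neg at hc
  rcases Nat.eq_zero_or_pos v.val with h0 | h0
  · exact h (pathGraph_degree_zero (by omega) v h0)
  · exact h (pathGraph_degree_last (by omega) v (by have := v.isLt; omega))

lemma pathGraph_degree_eq_one_iff {n : ℕ} (hn : 3 ≤ n) (v : Fin n) :
    (pathGraph n).degree v = 1 ↔ v.val = 0 ∨ v.val = n - 1 := by
  constructor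
  · intro h
    by_contra hc
    push_neg at hc
    have := pathGraph_degree_interior v (by omega) (by have := v.isLt; omega)
    omega
  · rintro (h | h)
    · exact pathGraph_degree_zero (by omega) v h
    · exact pathGraph_degree_last (by omega) v h

variable [Fintype α] [Fintype β]

lemma joinEdge_degree_inl (x : α) :
    (joinEdge A B u v).degree (Sum.inl x) = A.degree x + (if x = u then 1 else 0) := by
  by_cases hx : x = u
  · have hnb : (joinEdge A B u v).neighborFinset (Sum.inl x) =
        insert (Sum.inr v) ((A.neighborFinset x).map ⟨Sum.inl, Sum.inl_injective⟩) := by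
      ext z
      rcases z with y | y <;>
        simp [mem_neighborFinset, hx]
    rw [SimpleGraph.degree, hnb, Finset.card_insert_of_notMem (by simp),
      Finset.card_map, if_pos hx]
    rfl
  · have hnb : (joinEdge A B u v).neighborFinset (Sum.inl x) =
        (A.neighborFinset x).map ⟨Sum.inl, Sum.inl_injective⟩ := by
      ext z
      rcases z with y | y <;>
        simp [mem_neighborFinset, hx]
    rw [SimpleGraph.degree, hnb, Finset.card_map, if_neg hx]
    rfl

lemma joinEdge_degree_inr (y : β) :
    (joinEdge A B u v).degree (Sum.inr y) = B.degree y + (if y = v then 1 else 0) := by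
  by_cases hy : y = v
  · have hnb : (joinEdge A B u v).neighborFinset (Sum.inr y) =
        insert (Sum.inl u) ((B.neighborFinset y).map ⟨Sum.inr, Sum.inr_injective⟩) := by
      ext z
      rcases z with x | x <;>
        simp [mem_neighborFinset, hy]
    rw [SimpleGraph.degree, hnb, Finset.card_insert_of_notMem (by simp),
      Finset.card_map, if_pos hy]
    rfl
  · have hnb : (joinEdge A B u v).neighborFinset (Sum.inr y) =
        (B.neighborFinset y).map ⟨Sum.inr, Sum.inr_injective⟩ := by
      ext z
      rcases z with x | x <;>
        simp [mem_neighborFinset, hy]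
    rw [SimpleGraph.degree, hnb, Finset.card_map, if_neg hy]
    rfl


lemma pendants_joinEdge_paths (n₁ n₂ : ℕ) (h₁ : 3 ≤ n₁) (h₂ : 3 ≤ n₂)
    (a : Fin n₁) (b : Fin n₂)
    (ha : (pathGraph n₁).degree a ≠ 1) (hb : (pathGraph n₂).degree b ≠ 1) :
    pendants (joinEdge (pathGraph n₁) (pathGraph n₂) a b) =
      {Sum.inl ⟨0, by omega⟩, Sum.inl ⟨n₁ - 1, by omega⟩,
       Sum.inr ⟨0, by omega⟩, Sum.inr ⟨n₂ - 1, by omega⟩} := by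
  obtain ⟨ha1, ha2⟩ := pathGraph_deg_ne_one_interior h₁ a ha
  obtain ⟨hb1, hb2⟩ := pathGraph_deg_ne_one_interior h₂ b hb
  ext z
  rcases z with x | y
  · simp only [pendants, Finset.mem_filter, Finset.mem_univ, true_and,
      joinEdge_degree_inl, Finset.mem_insert, Finset.mem_singleton,
      Sum.inl.injEq, reduceCtorEq, or_false, Fin.ext_iff]
    by_cases hx : (x : ℕ) = (a : ℕ)
    · rw [if_pos hx, show x = a from Fin.ext hx, pathGraph_degree_interior a ha1 ha2]
      constructor
      · intro h; omega
      · intro h; omega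
    · rw [if_neg hx, Nat.add_zero, pathGraph_degree_eq_one_iff h₁ x]

  · simp only [pendants, Finset.mem_filter, Finset.mem_univ, true_and,
      joinEdge_degree_inr, Finset.mem_insert, Finset.mem_singleton,
      Sum.inr.injEq, reduceCtorEq, false_or, Fin.ext_iff]
    by_cases hy : (y : ℕ) = (b : ℕ)
    · rw [if_pos hy, show y = b from Fin.ext hy, pathGraph_degree_interior b hb1 hb2]
      constructor
      · intro h; omega
      · intro h; omega
    · rw [if_neg hy, Nat.add_zero, pathGraph_degree_eq_one_iff h₂ y]

lemma TW_joinEdge_paths (n₁ n₂ : ℕ) (h₁ : 3 ≤ n₁) (h₂ : 3 ≤ n₂)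
    (a : Fin n₁) (b : Fin n₂)
    (ha : (pathGraph n₁).degree a ≠ 1) (hb : (pathGraph n₂).degree b ≠ 1) :
    TW (joinEdge (pathGraph n₁) (pathGraph n₂) a b) = 3 * (n₁ + n₂) - 2 := by
  obtain ⟨ha1, ha2⟩ := pathGraph_deg_ne_one_interior h₁ a ha
  obtain ⟨hb1, hb2⟩ := pathGraph_deg_ne_one_interior h₂ b hb
  have hPA := pathGraph_preconnected n₁
  have hPB := pathGraph_preconnected n₂
  set G := joinEdge (pathGraph n₁) (pathGraph n₂) a b with hG
  set p₁ : Fin n₁ ⊕ Fin n₂ := Sum.inl ⟨0, by omega⟩ with hp₁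
  set p₂ : Fin n₁ ⊕ Fin n₂ := Sum.inl ⟨n₁ - 1, by omega⟩ with hp₂
  set p₃ : Fin n₁ ⊕ Fin n₂ := Sum.inr ⟨0, by omega⟩ with hp₃
  set p₄ : Fin n₁ ⊕ Fin n₂ := Sum.inr ⟨n₂ - 1, by omega⟩ with hp₄
  have hne12 : p₁ ≠ p₂ := by simp [hp₁, hp₂, Fin.ext_iff]; omega
  have h1 : p₁ ∉ ({p₂, p₃, p₄} : Finset _) := by
    simp [hp₁, hp₂, hp₃, hp₄, Fin.ext_iff]; omega
  have h2 : p₂ ∉ ({p₃, p₄} : Finset _) := by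
    simp [hp₂, hp₃, hp₄]
  have h3 : p₃ ∉ ({p₄} : Finset _) := by
    simp [hp₃, hp₄, Fin.ext_iff]; omega
  have hset := pendants_joinEdge_paths n₁ n₂ h₁ h₂ a b ha hb
  rw [TW, hset]
  have hinner : ∀ z : Fin n₁ ⊕ Fin n₂,
      ∑ w ∈ ({p₁, p₂, p₃, p₄} : Finset _), G.dist z w =
        G.dist z p₁ + G.dist z p₂ + G.dist z p₃ + G.dist z p₄ := by
    intro z
    rw [Finset.sum_insert h1, Finset.sum_insert h2, Finset.sum_insert h3,
      Finset.sum_singleton]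
    ring
  rw [Finset.sum_insert h1, Finset.sum_insert h2, Finset.sum_insert h3,
    Finset.sum_singleton, hinner p₁, hinner p₂, hinner p₃, hinner p₄]
  simp only [hp₁, hp₂, hp₃, hp₄, hG,
    joinEdge_dist_ll hPA, joinEdge_dist_rr hPB,
    joinEdge_dist_lr hPA hPB, joinEdge_dist_rl hPA hPB,
    pathGraph_dist, Fin.val_mk]
  omega

/-- Two trees, each obtained by joining two paths at non-pendant vertices by an edge,
with the total number of vertices the same, have equal terminal Wiener indices. -/
theorem stmt9 (n n₁ n₂ n₃ n₄ : ℕ) (hn : 6 ≤ n)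
    (h₁ : 3 ≤ n₁) (h₂ : 3 ≤ n₂) (h₃ : 3 ≤ n₃) (h₄ : 3 ≤ n₄)
    (hsum : n₁ + n₂ = n) (hsum' : n₃ + n₄ = n)
    (a : Fin n₁) (b : Fin n₂) (c : Fin n₃) (d : Fin n₄)
    (hA : (pathGraph n₁).degree a ≠ 1) (hB : (pathGraph n₂).degree b ≠ 1)
    (hC : (pathGraph n₃).degree c ≠ 1) (hD : (pathGraph n₄).degree d ≠ 1) :
    TW (joinEdge (pathGraph n₁) (pathGraph n₂) a b) =
      TW (joinEdge (pathGraph n₃) (pathGraph n₄) c d) := by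
  rw [TW_joinEdge_paths n₁ n₂ h₁ h₂ a b hA hB,
    TW_joinEdge_paths n₃ n₄ h₃ h₄ c d hC hD, hsum, hsum']
end
end

section
/- Let T be a tree with non-pendant vertices i and j satisfying d⁺_T(i) = d⁺_T(j), and let Z be a tree (disjoint from T, each with at least 3 vertices) with a non-pendant vertex u. Let T' be obtained by identifying u with i, and T'' by identifying u with j. Then TW(T') = TW(T''). -/
open Finset SimpleGraph

noncomputable section
open scoped Classical

/-- The graph obtained from `A` and `B` by identifying `u ∈ A` with `v ∈ B`
(the merged vertex is represented by `Sum.inl u`). -/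
def glue {α β : Type*} (A : SimpleGraph α) (B : SimpleGraph β) (u : α) (v : β) :
    SimpleGraph (α ⊕ {b : β // b ≠ v}) :=
  SimpleGraph.fromRel fun x y =>
    match x, y with
    | Sum.inl a, Sum.inl a' => A.Adj a a'
    | Sum.inr b, Sum.inr b' => B.Adj b.1 b'.1
    | Sum.inl a, Sum.inr b => a = u ∧ B.Adj v b.1
    | Sum.inr _, Sum.inl _ => False

section Aux

variable {α β : Type*} (T : SimpleGraph α) (Z : SimpleGraph β) (i : α) (u : β)

lemma glue_adj_inl_inl {a a' : α} :
    (glue T Z i u).Adj (Sum.inl a) (Sum.inl a') ↔ T.Adj a a' := by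
  simp only [glue, fromRel_adj, ne_eq, Sum.inl.injEq]
  constructor
  · rintro ⟨hne, h | h⟩
    · exact h
    · exact h.symm
  · intro h
    exact ⟨h.ne, Or.inl h⟩

lemma glue_adj_inr_inr {b b' : {b : β // b ≠ u}} :
    (glue T Z i u).Adj (Sum.inr b) (Sum.inr b') ↔ Z.Adj b.1 b'.1 := by
  simp only [glue, fromRel_adj, ne_eq, Sum.inr.injEq]
  constructor
  · rintro ⟨hne, h | h⟩
    · exact h
    · exact h.symm
  · intro h
    exact ⟨fun hc => h.ne (congrArg Subtype.val hc), Or.inl h⟩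

lemma glue_adj_inl_inr {a : α} {b : {b : β // b ≠ u}} :
    (glue T Z i u).Adj (Sum.inl a) (Sum.inr b) ↔ a = i ∧ Z.Adj u b.1 := by
  simp only [glue, fromRel_adj, ne_eq]
  constructor
  · rintro ⟨hne, h | h⟩
    · exact h
    · exact h.elim
  · intro h
    exact ⟨Sum.inl_ne_inr, Or.inl h⟩

lemma glue_adj_inr_inl {a : α} {b : {b : β // b ≠ u}} :
    (glue T Z i u).Adj (Sum.inr b) (Sum.inl a) ↔ a = i ∧ Z.Adj u b.1 := by
  rw [adj_comm, glue_adj_inl_inr]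

/-- projection onto the T-side -/
def piT : α ⊕ {b : β // b ≠ u} → α := Sum.elim id (fun _ => i)
/-- projection onto the Z-side -/
def piZ : α ⊕ {b : β // b ≠ u} → β := Sum.elim (fun _ => u) Subtype.val

lemma glue_walk_project {x y : α ⊕ {b : β // b ≠ u}} (w : (glue T Z i u).Walk x y) :
    ∃ (wT : T.Walk (piT i u x) (piT i u y)) (wZ : Z.Walk (piZ u x) (piZ u y)),
      wT.length + wZ.length ≤ w.length := by
  induction w with
  | nil => exact ⟨.nil, .nil, le_rfl⟩
  | @cons x x' y h w ih =>
    obtain ⟨wT, wZ, hlen⟩ := ih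
    rcases x with a | b <;> rcases x' with a' | b'
    · have h' := (glue_adj_inl_inl T Z i u).mp h
      exact ⟨.cons h' wT, wZ, by show wT.length + 1 + wZ.length ≤ w.length + 1; omega⟩
    · obtain ⟨hai, hZ⟩ := (glue_adj_inl_inr T Z i u).mp h
      subst hai
      exact ⟨wT, .cons hZ wZ, by show wT.length + (wZ.length + 1) ≤ w.length + 1; omega⟩
    · obtain ⟨hai, hZ⟩ := (glue_adj_inr_inl T Z i u).mp h
      subst hai
      exact ⟨wT, .cons hZ.symm wZ, by show wT.length + (wZ.length + 1) ≤ w.length + 1; omega⟩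
    · have h' := (glue_adj_inr_inr T Z i u).mp h
      exact ⟨wT, .cons h' wZ, by show wT.length + (wZ.length + 1) ≤ w.length + 1; omega⟩

/-- inl as a graph hom -/
def glueHomT : T →g glue T Z i u :=
  ⟨Sum.inl, fun h => (glue_adj_inl_inl T Z i u).mpr h⟩

def glueSigma : β → α ⊕ {b : β // b ≠ u} :=
  fun b => if h : b = u then Sum.inl i else Sum.inr ⟨b, h⟩

lemma glueSigma_ne {b : β} (hb : b ≠ u) : glueSigma i u b = Sum.inr ⟨b, hb⟩ := dif_neg hb
lemma glueSigma_u : glueSigma i u u = Sum.inl i := dif_pos rfl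

def glueHomZ : Z →g glue T Z i u := by
  refine ⟨glueSigma i u, ?_⟩
  intro b c h
  by_cases hb : b = u <;> by_cases hc : c = u
  · exact absurd (hb ▸ hc ▸ h) Z.irrefl
  · rw [hb, glueSigma_u, glueSigma_ne i u hc]
    exact (glue_adj_inl_inr T Z i u).mpr ⟨rfl, hb ▸ h⟩
  · rw [hc, glueSigma_u, glueSigma_ne i u hb]
    exact (glue_adj_inr_inl T Z i u).mpr ⟨rfl, hc ▸ h.symm⟩
  · rw [glueSigma_ne i u hb, glueSigma_ne i u hc]
    exact (glue_adj_inr_inr T Z i u).mpr h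

variable {T Z}

lemma glue_reachable (hTc : T.Connected) (hZc : Z.Connected)
    (x y : α ⊕ {b : β // b ≠ u}) : (glue T Z i u).Reachable x y := by
  have key : ∀ x, (glue T Z i u).Reachable x (Sum.inl i) := by
    intro x
    rcases x with a | b
    · obtain ⟨w⟩ := hTc.preconnected a i
      exact ⟨w.map (glueHomT T Z i u)⟩
    · obtain ⟨w⟩ := hZc.preconnected b.1 u
      exact ⟨(w.map (glueHomZ T Z i u)).copy (glueSigma_ne i u b.2) (glueSigma_u i u)⟩
  exact (key x).trans (key y).symm

lemma glue_dist_inl_inl (hTc : T.Connected) (hZc : Z.Connected) (a a' : α) :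
    (glue T Z i u).dist (Sum.inl a) (Sum.inl a') = T.dist a a' := by
  apply le_antisymm
  · obtain ⟨p, hp⟩ := hTc.exists_walk_length_eq_dist a a'
    have := SimpleGraph.dist_le (p.map (glueHomT T Z i u))
    rwa [Walk.length_map, hp] at this
  · obtain ⟨w, hw⟩ := (glue_reachable i u hTc hZc (Sum.inl a) (Sum.inl a')).exists_walk_length_eq_dist
    obtain ⟨wT, wZ, hlen⟩ := glue_walk_project T Z i u w
    have h1 : T.dist a a' ≤ wT.length := SimpleGraph.dist_le wT
    omega

lemma glue_dist_sigma_sigma (hTc : T.Connected) (hZc : Z.Connected)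
    {b b' : β} (hb : b ≠ u) (hb' : b' ≠ u) :
    (glue T Z i u).dist (glueSigma i u b) (glueSigma i u b') = Z.dist b b' := by
  rw [glueSigma_ne i u hb, glueSigma_ne i u hb']
  apply le_antisymm
  · obtain ⟨p, hp⟩ := hZc.exists_walk_length_eq_dist b b'
    have := SimpleGraph.dist_le
      ((p.map (glueHomZ T Z i u)).copy (glueSigma_ne i u hb) (glueSigma_ne i u hb'))
    erw [Walk.length_copy] at this
    rwa [Walk.length_map, hp] at this
  · obtain ⟨w, hw⟩ := (glue_reachable i u hTc hZc (Sum.inr ⟨b, hb⟩)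
      (Sum.inr ⟨b', hb'⟩)).exists_walk_length_eq_dist
    obtain ⟨wT, wZ, hlen⟩ := glue_walk_project T Z i u w
    have h1 : Z.dist b b' ≤ wZ.length := SimpleGraph.dist_le wZ
    omega

lemma glue_dist_inl_sigma (hTc : T.Connected) (hZc : Z.Connected) (a : α)
    {b : β} (hb : b ≠ u) :
    (glue T Z i u).dist (Sum.inl a) (glueSigma i u b) = T.dist a i + Z.dist u b := by
  rw [glueSigma_ne i u hb]
  apply le_antisymm
  · obtain ⟨p, hp⟩ := hTc.exists_walk_length_eq_dist a i
    obtain ⟨q, hq⟩ := hZc.exists_walk_length_eq_dist u b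
    have := SimpleGraph.dist_le ((p.map (glueHomT T Z i u)).append
      ((q.map (glueHomZ T Z i u)).copy (glueSigma_u i u) (glueSigma_ne i u hb)))
    rw [Walk.length_append] at this
    erw [Walk.length_copy] at this
    rwa [Walk.length_map, Walk.length_map, hp, hq] at this
  · obtain ⟨w, hw⟩ := (glue_reachable i u hTc hZc (Sum.inl a)
      (Sum.inr ⟨b, hb⟩)).exists_walk_length_eq_dist
    obtain ⟨wT, wZ, hlen⟩ := glue_walk_project T Z i u w
    have h1 : T.dist a i ≤ wT.length := SimpleGraph.dist_le wT
    have h2 : Z.dist u b ≤ wZ.length := SimpleGraph.dist_le wZ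
    omega

section Degrees

variable [Fintype α] [Fintype β]

lemma glue_degree_inl {a : α} (ha : a ≠ i) :
    (glue T Z i u).degree (Sum.inl a) = T.degree a := by
  have hset : (glue T Z i u).neighborFinset (Sum.inl a)
      = (T.neighborFinset a).map ⟨Sum.inl, Sum.inl_injective⟩ := by
    ext x
    rcases x with a' | b
    · simp [mem_neighborFinset, glue_adj_inl_inl]
    · simp [mem_neighborFinset, glue_adj_inl_inr, ha]
  rw [SimpleGraph.degree, hset, Finset.card_map, SimpleGraph.degree]

lemma glueSigma_injective : Function.Injective (glueSigma (β := β) i u) := by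
  intro x y h
  by_cases hx : x = u <;> by_cases hy : y = u
  · rw [hx, hy]
  · rw [hx, glueSigma_u, glueSigma_ne i u hy] at h; exact absurd h Sum.inl_ne_inr
  · rw [hy, glueSigma_u, glueSigma_ne i u hx] at h; exact absurd h.symm Sum.inl_ne_inr
  · rw [glueSigma_ne i u hx, glueSigma_ne i u hy] at h
    exact congrArg Subtype.val (Sum.inr_injective h)

lemma glue_degree_inr (b : {b : β // b ≠ u}) :
    (glue T Z i u).degree (Sum.inr b) = Z.degree b.1 := by
  have hset : (glue T Z i u).neighborFinset (Sum.inr b)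
      = (Z.neighborFinset b.1).map ⟨glueSigma i u, glueSigma_injective i u⟩ := by
    ext x
    simp only [mem_neighborFinset, Finset.mem_map, Function.Embedding.coeFn_mk]
    rcases x with a | b'
    · rw [glue_adj_inr_inl]
      constructor
      · rintro ⟨ha, hZ⟩
        exact ⟨u, hZ.symm, by rw [glueSigma_u, ha]⟩
      · rintro ⟨c, hc, hσ⟩
        by_cases hcu : c = u
        · subst hcu
          rw [glueSigma_u] at hσ
          cases hσ
          exact ⟨rfl, hc.symm⟩
        · rw [glueSigma_ne i u hcu] at hσ
          exact absurd hσ Sum.inr_ne_inl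
    · rw [glue_adj_inr_inr]
      constructor
      · intro hZ
        exact ⟨b'.1, hZ, glueSigma_ne i u b'.2⟩
      · rintro ⟨c, hc, hσ⟩
        by_cases hcu : c = u
        · subst hcu; rw [glueSigma_u] at hσ; exact absurd hσ Sum.inl_ne_inr
        · rw [glueSigma_ne i u hcu] at hσ
          obtain rfl : (⟨c, hcu⟩ : {b : β // b ≠ u}) = b' := Sum.inr_injective hσ
          exact hc
  rw [SimpleGraph.degree, hset, Finset.card_map, SimpleGraph.degree]

lemma exists_adj_of_connected {G : SimpleGraph α} (hc : G.Connected)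
    (h : 1 < Fintype.card α) (v : α) : ∃ w, G.Adj v w := by
  obtain ⟨v', hne⟩ := Fintype.exists_ne_of_one_lt_card h v
  obtain ⟨w⟩ := hc.preconnected v v'
  exact ⟨w.getVert 1, w.adj_snd (Walk.not_nil_of_ne hne.symm)⟩

lemma glue_one_lt_degree_inl_i (hTc : T.Connected) (hZc : Z.Connected)
    (ha : 1 < Fintype.card α) (hb : 1 < Fintype.card β) :
    1 < (glue T Z i u).degree (Sum.inl i) := by
  obtain ⟨t, ht⟩ := exists_adj_of_connected hTc ha i
  obtain ⟨z, hz⟩ := exists_adj_of_connected hZc hb u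
  rw [SimpleGraph.degree, Finset.one_lt_card]
  refine ⟨Sum.inl t, ?_, Sum.inr ⟨z, hz.ne'⟩, ?_, by simp⟩
  · rw [mem_neighborFinset]; exact (glue_adj_inl_inl T Z i u).mpr ht
  · rw [mem_neighborFinset]; exact (glue_adj_inl_inr T Z i u).mpr ⟨rfl, hz⟩

lemma glue_pendants (hTc : T.Connected) (hZc : Z.Connected)
    (ha : 1 < Fintype.card α) (hb : 1 < Fintype.card β)
    (hi : T.degree i ≠ 1) (hu : Z.degree u ≠ 1) :
    pendants (glue T Z i u)
      = (pendants T).map ⟨Sum.inl, Sum.inl_injective⟩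
        ∪ ((pendants Z).subtype (· ≠ u)).map ⟨Sum.inr, Sum.inr_injective⟩ := by
  ext x
  simp only [pendants, Finset.mem_filter, Finset.mem_univ, true_and, Finset.mem_union,
    Finset.mem_map, Finset.mem_subtype, Function.Embedding.coeFn_mk]
  rcases x with a | b
  · by_cases hai : a = i
    · subst hai
      have h1 := glue_one_lt_degree_inl_i a u hTc hZc ha hb
      constructor
      · intro h; omega
      · rintro (⟨a', h', ha'⟩ | ⟨b', h', hb'⟩)
        · cases ha'; exact absurd h' hi
        · exact absurd hb' Sum.inr_ne_inl
    · rw [glue_degree_inl i u hai]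
      constructor
      · intro h; exact Or.inl ⟨a, h, rfl⟩
      · rintro (⟨a', h', ha'⟩ | ⟨b', h', hb'⟩)
        · cases ha'; exact h'
        · exact absurd hb' Sum.inr_ne_inl
  · rw [glue_degree_inr i u b]
    constructor
    · intro h
      exact Or.inr ⟨b, h, rfl⟩
    · rintro (⟨a', h', ha'⟩ | ⟨b', h', hb'⟩)
      · exact absurd ha' Sum.inl_ne_inr
      · cases Sum.inr_injective hb'; exact h'

lemma pendant_ne_of_degree_ne {G : SimpleGraph β} {b : β} (hu : G.degree u ≠ 1)
    (hb : b ∈ pendants G) : b ≠ u := by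
  rintro rfl
  rw [pendants, Finset.mem_filter] at hb
  exact hu hb.2

lemma glue_sum_pendants (hTc : T.Connected) (hZc : Z.Connected)
    (ha : 1 < Fintype.card α) (hb : 1 < Fintype.card β)
    (hi : T.degree i ≠ 1) (hu : Z.degree u ≠ 1)
    (f : α ⊕ {b : β // b ≠ u} → ℕ) :
    ∑ x ∈ pendants (glue T Z i u), f x
      = (∑ a ∈ pendants T, f (Sum.inl a)) + ∑ b ∈ pendants Z, f (glueSigma i u b) := by
  rw [glue_pendants i u hTc hZc ha hb hi hu, Finset.sum_union, Finset.sum_map, Finset.sum_map]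
  · congr 1
    have h1 : ∀ x ∈ (pendants Z).subtype (· ≠ u),
        f ((⟨Sum.inr, Sum.inr_injective⟩ : {b : β // b ≠ u} ↪ _) x)
          = (fun b => f (glueSigma i u b)) x.1 := by
      intro b _
      simp only [Function.Embedding.coeFn_mk]
      rw [glueSigma_ne i u b.2]
    rw [Finset.sum_congr rfl h1,
      Finset.sum_subtype_eq_sum_filter (fun b => f (glueSigma i u b)),
      show (pendants Z).filter (· ≠ u) = pendants Z from
        Finset.filter_true_of_mem fun b hb' => pendant_ne_of_degree_ne u hu hb']
  · rw [Finset.disjoint_left]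
    rintro x hx hy
    obtain ⟨a', _, rfl⟩ := Finset.mem_map.mp hx
    obtain ⟨b', _, h⟩ := Finset.mem_map.mp hy
    exact absurd h Sum.inr_ne_inl

lemma glue_key (hTc : T.Connected) (hZc : Z.Connected)
    (ha : 1 < Fintype.card α) (hb : 1 < Fintype.card β)
    (hi : T.degree i ≠ 1) (hu : Z.degree u ≠ 1) :
    ∑ x ∈ pendants (glue T Z i u), ∑ y ∈ pendants (glue T Z i u), (glue T Z i u).dist x y
    = (∑ a ∈ pendants T, ∑ a' ∈ pendants T, T.dist a a')
      + (∑ b ∈ pendants Z, ∑ b' ∈ pendants Z, Z.dist b b')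
      + 2 * ((pendants Z).card * dplus T i + (pendants T).card * dplus Z u) := by
  have hne : ∀ b ∈ pendants Z, b ≠ u := fun b hb' => pendant_ne_of_degree_ne u hu hb'
  have e1 : ∀ a ∈ pendants T, ∑ y ∈ pendants (glue T Z i u), (glue T Z i u).dist (Sum.inl a) y
      = (∑ a' ∈ pendants T, T.dist a a')
        + ((pendants Z).card * T.dist a i + ∑ b ∈ pendants Z, Z.dist u b) := by
    intro a _
    rw [glue_sum_pendants i u hTc hZc ha hb hi hu]
    congr 1
    · exact Finset.sum_congr rfl fun a' _ => glue_dist_inl_inl i u hTc hZc a a'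
    · rw [Finset.sum_congr rfl (fun b hb' => glue_dist_inl_sigma i u hTc hZc a (hne b hb')),
        Finset.sum_add_distrib, Finset.sum_const, smul_eq_mul]
  have e2 : ∀ b ∈ pendants Z, ∑ y ∈ pendants (glue T Z i u),
        (glue T Z i u).dist (glueSigma i u b) y
      = ((∑ a ∈ pendants T, T.dist a i) + (pendants T).card * Z.dist u b)
        + ∑ b' ∈ pendants Z, Z.dist b b' := by
    intro b hb'
    rw [glue_sum_pendants i u hTc hZc ha hb hi hu]
    congr 1
    · have step : ∀ a ∈ pendants T,
          (glue T Z i u).dist (glueSigma i u b) (Sum.inl a) = T.dist a i + Z.dist u b := by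
        intro a _
        rw [SimpleGraph.dist_comm]
        exact glue_dist_inl_sigma i u hTc hZc a (hne b hb')
      rw [Finset.sum_congr rfl step, Finset.sum_add_distrib, Finset.sum_const, smul_eq_mul]
    · exact Finset.sum_congr rfl fun b' hb2 =>
        glue_dist_sigma_sigma i u hTc hZc (hne b hb') (hne b' hb2)
  rw [glue_sum_pendants i u hTc hZc ha hb hi hu
    (fun x => ∑ y ∈ pendants (glue T Z i u), (glue T Z i u).dist x y)]
  rw [Finset.sum_congr rfl e1, Finset.sum_congr rfl e2]
  have hA : ∑ a ∈ pendants T, T.dist a i = dplus T i :=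
    Finset.sum_congr rfl fun a _ => T.dist_comm
  have hB : ∑ b ∈ pendants Z, Z.dist u b = dplus Z u := rfl
  simp only [Finset.sum_add_distrib, Finset.sum_const, smul_eq_mul, ← Finset.mul_sum, hA, hB]
  ring

end Degrees

end Aux

/-- If `i` and `j` are non-pendant vertices of a tree `T` with `d⁺_T(i) = d⁺_T(j)`, then
attaching a tree `Z` (via a non-pendant vertex `u`) at `i` or at `j` yields trees with
the same terminal Wiener index. -/
theorem stmt10 {α β : Type*} [Fintype α] [Fintype β]
    (T : SimpleGraph α) (Z : SimpleGraph β) (i j : α) (u : β)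
    (hT : T.IsTree) (hZ : Z.IsTree)
    (ha : 3 ≤ Fintype.card α) (hb : 3 ≤ Fintype.card β)
    (hi : T.degree i ≠ 1) (hj : T.degree j ≠ 1) (hu : Z.degree u ≠ 1)
    (hd : dplus T i = dplus T j) :
    TW (glue T Z i u) = TW (glue T Z j u) := by
  have h1 := glue_key i u hT.isConnected hZ.isConnected (by omega) (by omega) hi hu
  have h2 := glue_key j u hT.isConnected hZ.isConnected (by omega) (by omega) hj hu
  rw [TW, TW, h1, h2, hd]
end
end
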